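/- For any two distinct primes p and q, the image of ℚ under the diagonal embedding x ↦ (x, x) into ℚₚ × ℚ_q is dense (weak approximation for two places). -/

import Mathlib

/-!
The closure of the diagonal image of `ℚ` is a subring of `ℚ_[p] × ℚ_[q]`. Once it contains the
idempotent `(1, 0)`, it contains `(a, a) * (1, 0) + (b, b) * (0, 1) = (a, b)` for all rationals
`a, b`, hence the dense set `ℚ × ℚ`. The idempotent is the limit of integers `kₙ` with
`kₙ ≡ 1 mod pⁿ` and `kₙ ≡ 0 mod qⁿ`, which a Bézout identity for `pⁿ` and `qⁿ` provides.
-/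

open Filter Topology

theorem IsCoprime.exists_dvd_sub_one_and_dvd {R : Type*} [CommRing R] {a b : R}
    (h : IsCoprime a b) : ∃ k : R, a ∣ k - 1 ∧ b ∣ k := by
  obtain ⟨u, v, huv⟩ := h
  exact ⟨v * b, ⟨-u, by linear_combination huv⟩, dvd_mul_left b v⟩

theorem RingHom.denseRange_prod_of_mem_closure {K A B : Type*} [Ring K] [Ring A] [Ring B]
    [TopologicalSpace A] [IsTopologicalRing A] [TopologicalSpace B] [IsTopologicalRing B]
    {φ : K →+* A} {ψ : K →+* B} (hφ : DenseRange φ) (hψ : DenseRange ψ)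
    (h : ((1 : A), (0 : B)) ∈ closure (Set.range (φ.prod ψ))) :
    DenseRange (φ.prod ψ) := by
  set T := (φ.prod ψ).range.topologicalClosure
  have hT : (T : Set (A × B)) = closure (Set.range (φ.prod ψ)) := by
    rw [← RingHom.coe_range]; rfl
  have hidem : ((1 : A), (0 : B)) ∈ T := by rwa [← SetLike.mem_coe, hT]
  have hdiag (x : K) : φ.prod ψ x ∈ T := Subring.le_topologicalClosure _ (Set.mem_range_self x)
  have hprod : Set.range (Prod.map φ ψ) ⊆ T := by
    rintro _ ⟨⟨a, b⟩, rfl⟩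
    have hsplit : Prod.map φ ψ (a, b) = φ.prod ψ a * (1, 0) + φ.prod ψ b * (1 - (1, 0)) := by
      ext <;> simp
    rw [hsplit]
    exact add_mem (mul_mem (hdiag a) hidem) (mul_mem (hdiag b) (sub_mem (one_mem T) hidem))
  rw [DenseRange, ← dense_closure, ← hT]
  exact (hφ.prodMap hψ).mono hprod

theorem Padic.tendsto_intCast_zero_of_pow_dvd {p : ℕ} [Fact p.Prime] {k : ℕ → ℤ}
    (hk : ∀ n, (p : ℤ) ^ n ∣ k n) : Tendsto (fun n ↦ (k n : ℚ_[p])) atTop (𝓝 0) := by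
  refine squeeze_zero_norm (fun n ↦ (Padic.norm_int_le_pow_iff_dvd _ n).2 (hk n)) ?_
  simp_rw [zpow_neg, zpow_natCast, ← inv_pow]
  have hp : (1 : ℝ) < p := by exact_mod_cast (Fact.out : p.Prime).one_lt
  exact tendsto_pow_atTop_nhds_zero_of_lt_one (by positivity) (inv_lt_one_of_one_lt₀ hp)

/-- Weak approximation for two places: `ℚ` embeds diagonally with dense image
into `ℚₚ × ℚ_q` for distinct primes `p ≠ q`. -/
theorem denseRange_rat_diagonal_padic (p q : ℕ) [Fact p.Prime] [Fact q.Prime]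
    (hpq : p ≠ q) :
    DenseRange (fun r : ℚ => ((r : ℚ_[p]), (r : ℚ_[q]))) := by
  have hcop : IsCoprime (p : ℤ) q :=
    Nat.isCoprime_iff_coprime.2 ((Nat.coprime_primes Fact.out Fact.out).2 hpq)
  choose k hkp hkq using fun n ↦ (hcop.pow (m := n) (n := n)).exists_dvd_sub_one_and_dvd
  have hk_one : Tendsto (fun n ↦ (k n : ℚ_[p])) atTop (𝓝 1) := by
    simpa using (Padic.tendsto_intCast_zero_of_pow_dvd hkp).add_const 1
  have hk_zero := Padic.tendsto_intCast_zero_of_pow_dvd hkq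
  refine RingHom.denseRange_prod_of_mem_closure (φ := Rat.castHom ℚ_[p])
    (ψ := Rat.castHom ℚ_[q]) (Padic.denseRange_ratCast p) (Padic.denseRange_ratCast q)
    (mem_closure_of_tendsto (hk_one.prodMk_nhds hk_zero) ?_)
  exact Eventually.of_forall fun n ↦ ⟨k n, by ext <;> simp⟩
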